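/- Let T be a tree with maximum degree ≤ 4 having n vertices and b branching vertices. Then W_p(T) ≤ n + 10b − 7 if 1 ≤ b ≤ (n−4)/5; W_p(T) ≤ 3n − 15 if (n−4)/5 < b < (3n−4)/7; and W_p(T) ≤ 9n − 14b − 23 if (3n−4)/7 ≤ b < n/2 − 1. -/
import Mathlib

noncomputable def deg {V : Type*} [Fintype V] (G : SimpleGraph V) (v : V) : ℕ := by
  classical exact G.degree v

noncomputable def Wp {V : Type*} [Fintype V] (G : SimpleGraph V) : ℤ := by
  classical
  exact ∑ e ∈ G.edgeFinset,
    Sym2.lift ⟨fun u v => ((deg G u : ℤ) - 1) * ((deg G v : ℤ) - 1),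
      fun u v => by ring⟩ e

open Finset SimpleGraph SimpleGraph.Walk

set_option maxHeartbeats 1000000

section Aux

variable {V : Type*} [Fintype V]

lemma deg_eq (G : SimpleGraph V) [DecidableRel G.Adj] (v : V) : deg G v = G.degree v := by
  unfold deg
  congr!

open scoped Classical in
lemma dart_sum_fst (T : SimpleGraph V) (g : V → ℤ) :
    ∑ d : T.Dart, g d.fst = ∑ v, (T.degree v : ℤ) * g v := by
  rw [← Finset.sum_fiberwise_of_maps_to (g := fun d : T.Dart => d.fst) (t := univ)
    (fun d _ => mem_univ _) (fun d => g d.fst)]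
  refine Finset.sum_congr rfl fun v _ => ?_
  have h1 : ∑ d ∈ univ.filter (fun d : T.Dart => d.fst = v), g d.fst
      = ∑ _d ∈ univ.filter (fun d : T.Dart => d.fst = v), g v :=
    Finset.sum_congr rfl fun d hd => congrArg g (Finset.mem_filter.mp hd).2
  have h2 : #(univ.filter fun d : T.Dart => d.fst = v) = T.degree v := by
    simpa using T.dart_fst_fiber_card_eq_degree v
  rw [h1, Finset.sum_const, h2, nsmul_eq_mul]

open scoped Classical in
lemma dart_sum_symm (T : SimpleGraph V) (F : T.Dart → ℤ) :
    ∑ d : T.Dart, F d = ∑ d : T.Dart, F d.symm := by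
  refine Finset.sum_bij' (fun d _ => d.symm) (fun d _ => d.symm) ?_ ?_ ?_ ?_ ?_ <;>
    simp [Dart.symm_symm]

open scoped Classical in
lemma dart_sum_edge (T : SimpleGraph V) (F : Sym2 V → ℤ) :
    ∑ d : T.Dart, F d.edge = 2 * ∑ e ∈ T.edgeFinset, F e := by
  rw [← Finset.sum_fiberwise_of_maps_to (g := fun d : T.Dart => d.edge) (t := T.edgeFinset)
    (fun d _ => by simpa using d.edge_mem) (fun d => F d.edge), Finset.mul_sum]
  refine Finset.sum_congr rfl fun e he => ?_
  have h1 : ∑ d ∈ univ.filter (fun d : T.Dart => d.edge = e), F d.edge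
      = ∑ _d ∈ univ.filter (fun d : T.Dart => d.edge = e), F e :=
    Finset.sum_congr rfl fun d hd => congrArg F (Finset.mem_filter.mp hd).2
  have h2 : #(univ.filter fun d : T.Dart => d.edge = e) = 2 := by
    simpa using T.dart_edge_fiber_card e (by simpa using he)
  rw [h1, Finset.sum_const, h2, two_smul, two_mul]

open scoped Classical in
lemma tree_edges_within (T : SimpleGraph V) (hT : T.IsTree) (S : Finset V) (hS : S.Nonempty) :
    #(T.edgeFinset.filter fun e => ∀ v ∈ e, v ∈ S) + 1 ≤ #S := by
  obtain ⟨r, hr⟩ := hS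
  choose f hf hf' using (hT.existsUnique_path · r)
  set F : V → Sym2 V := fun w =>
    if h : w = r then s(r, r) else ((f w).firstDart (not_nil_of_ne h)).edge with hF
  have key : ∀ x y, T.Adj x y → x ∈ S → y ∈ S → (f x).length ≤ (f y).length →
      ∃ w ∈ S.erase r, F w = s(x, y) := by
    intro x y h hx hy h'
    have hyr : y ≠ r := by
      rintro rfl
      rw [← hf' _ nil IsPath.nil, length_nil,
        ← hf' _ (.cons h .nil) (IsPath.nil.cons <| by simpa using h.ne),
        length_cons, length_nil] at h'
      simp [Nat.le_zero, Nat.one_ne_zero] at h'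
    refine ⟨y, Finset.mem_erase.mpr ⟨hyr, hy⟩, ?_⟩
    rw [hF]
    simp only [dif_neg hyr]
    refine dart_edge_eq_mk'_iff.2 (Or.inr ?_)
    rw [← hf' _ (.cons h.symm (f x)) ((cons_isPath_iff _ _).2 ⟨hf _, fun hys => ?contra⟩)]
    · simp only [firstDart_toProd, getVert_cons_succ, getVert_zero, Prod.swap_prod_mk]
    case contra =>
      suffices (f x).takeUntil y hys = .cons h .nil by
        rw [← take_spec _ hys] at h'
        simp [this, hf' _ _ ((hf _).dropUntil hys)] at h'
      refine (hT.existsUnique_path _ _).unique ((hf _).takeUntil _) ?_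
      simp [h.ne]
  have hsurj : Set.SurjOn F ↑(S.erase r) ↑(T.edgeFinset.filter fun e => ∀ v ∈ e, v ∈ S) := by
    intro e he
    simp only [Finset.coe_filter, Set.mem_setOf_eq, Finset.mem_coe] at he
    obtain ⟨he1, he2⟩ := he
    induction e with
    | _ x y =>
      have hadj : T.Adj x y := by simpa [mem_edgeFinset] using he1
      have hx : x ∈ S := he2 x (by simp)
      have hy : y ∈ S := he2 y (by simp)
      rcases le_total (f x).length (f y).length with h' | h'
      · obtain ⟨w, hw, hFw⟩ := key x y hadj hx hy h'
        exact ⟨w, hw, hFw⟩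
      · obtain ⟨w, hw, hFw⟩ := key y x hadj.symm hy hx h'
        exact ⟨w, hw, by rw [hFw, Sym2.eq_swap]⟩
  have h1 := Finset.card_le_card_of_surjOn F hsurj
  have h2 : #(S.erase r) = #S - 1 := Finset.card_erase_of_mem hr
  have h3 : 1 ≤ #S := Finset.card_pos.mpr ⟨r, hr⟩
  omega

open scoped Classical in
lemma dart_bound (T : SimpleGraph V) (hT : T.IsTree) (P : V → Prop) [DecidablePred P]
    (hne : ∃ v, P v) :
    ∑ d : T.Dart, (if P d.fst ∧ P d.snd then (1:ℤ) else 0)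
      ≤ 2 * (#(univ.filter fun v => P v) : ℤ) - 2 := by
  set S := univ.filter fun v => P v with hS
  have hmemS : ∀ v : V, v ∈ S ↔ P v := by intro v; simp [hS]
  have hSne : S.Nonempty := ⟨hne.choose, (hmemS _).mpr hne.choose_spec⟩
  have h1 : ∑ d : T.Dart, (if P d.fst ∧ P d.snd then (1:ℤ) else 0)
      = 2 * ∑ e ∈ T.edgeFinset,
          (Sym2.lift ⟨fun u v => if P u ∧ P v then (1:ℤ) else 0,
            fun u v => if_congr and_comm rfl rfl⟩) e := by
    rw [← dart_sum_edge]
    refine Finset.sum_congr rfl fun d _ => ?_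
    rcases d with ⟨⟨x, y⟩, hadj⟩
    simp [SimpleGraph.Dart.edge]
  have h2 : ∑ e ∈ T.edgeFinset,
      (Sym2.lift ⟨fun u v => if P u ∧ P v then (1:ℤ) else 0,
        fun u v => if_congr and_comm rfl rfl⟩) e
      = (#(T.edgeFinset.filter fun e => ∀ v ∈ e, v ∈ S) : ℤ) := by
    rw [Finset.card_filter]
    push_cast
    refine Finset.sum_congr rfl fun e _ => ?_
    induction e with
    | _ x y =>
      by_cases h : P x ∧ P y
      · simp [Sym2.lift_mk, Sym2.mem_iff, hmemS, h, h.1, h.2]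
      · simp only [Sym2.lift_mk]
        rw [if_neg h, if_neg]
        intro hall
        exact h ⟨(hmemS _).mp (hall x (Sym2.mem_mk_left _ _)),
          (hmemS _).mp (hall y (Sym2.mem_mk_right _ _))⟩
  have h3 := tree_edges_within T hT S hSne
  have h4 : (#(T.edgeFinset.filter fun e => ∀ v ∈ e, v ∈ S) : ℤ) + 1 ≤ (#S : ℤ) := by
    exact_mod_cast h3
  rw [h1, h2]
  linarith

lemma degree_pos_of_tree (T : SimpleGraph V) [DecidableRel T.Adj] (hT : T.IsTree)
    (h2 : 2 ≤ Fintype.card V) (v : V) : 0 < T.degree v := by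
  obtain ⟨w, hw⟩ := Fintype.exists_ne_of_one_lt_card (by omega) v
  obtain ⟨p⟩ := hT.isConnected.preconnected v w
  rw [T.degree_pos_iff_exists_adj]
  cases p with
  | nil => exact absurd rfl hw.symm
  | cons h q => exact ⟨_, h⟩

lemma no_leaf_leaf (T : SimpleGraph V) [DecidableRel T.Adj] (hT : T.IsTree)
    (h3 : 3 ≤ Fintype.card V) {u v : V} (h : T.Adj u v)
    (hu : T.degree u = 1) (hv : T.degree v = 1) : False := by
  classical
  have hsingle : ∀ {a c : V}, T.degree a = 1 → T.Adj a c → T.neighborFinset a = {c} := by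
    intro a c ha hac
    obtain ⟨x, hx⟩ := Finset.card_eq_one.mp (by rw [← ha]; rfl)
    have hcx : c = x := by
      have := (T.mem_neighborFinset a c).mpr hac
      rwa [hx, Finset.mem_singleton] at this
    rw [hx, hcx]
  have huniv : ∀ w : V, w = u ∨ w = v := by
    intro w
    obtain ⟨p, hp, -⟩ := hT.existsUnique_path u w
    cases p with
    | nil => exact Or.inl rfl
    | @cons _ x _ h' q =>
      have hx : x = v := by
        have := (T.mem_neighborFinset u x).mpr h'
        rwa [hsingle hu h, Finset.mem_singleton] at this
      obtain ⟨hq, hu_not⟩ := (Walk.cons_isPath_iff _ _).mp hp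
      cases q with
      | nil => exact Or.inr hx
      | @cons _ y _ h'' q2 =>
        have hy : y = u := by
          have := (T.mem_neighborFinset x y).mpr h''
          rwa [hsingle (show T.degree x = 1 by rw [hx]; exact hv)
            (show T.Adj x u by rw [hx]; exact h.symm), Finset.mem_singleton] at this
        subst hy
        exact absurd (Walk.start_mem_support q2) (by simpa using hu_not)
  have hsub : (Finset.univ : Finset V) ⊆ {u, v} := by
    intro w _
    rcases huniv w with rfl | rfl <;> simp
  have hcard : Fintype.card V ≤ 2 := by
    calc Fintype.card V = #(Finset.univ : Finset V) := rfl
    _ ≤ #({u, v} : Finset V) := Finset.card_le_card hsub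
    _ ≤ 2 := (Finset.card_insert_le _ _).trans (by simp)
  omega

end Aux

theorem wp_upper_bound_branching {V : Type*} [Fintype V] (T : SimpleGraph V)
    (hT : T.IsTree) (hmax : ∀ v : V, deg T v ≤ 4)
    (n b : ℕ)
    (hn7 : 7 ≤ n)
    (hncard : n = Fintype.card V)
    (hb : b = Nat.card {v : V // 3 ≤ deg T v}) :
    (1 ≤ b → 5 * (b : ℤ) ≤ (n : ℤ) - 4 → Wp T ≤ (n : ℤ) + 10 * b - 7) ∧
    ((n : ℤ) - 4 < 5 * b → 7 * (b : ℤ) < 3 * (n : ℤ) - 4 → Wp T ≤ 3 * (n : ℤ) - 15) ∧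
    (3 * (n : ℤ) - 4 ≤ 7 * b → 2 * (b : ℤ) < (n : ℤ) - 2 → Wp T ≤ 9 * (n : ℤ) - 14 * b - 23) := by
  classical
  have hdeg : ∀ v : V, deg T v = T.degree v := fun v => deg_eq T v
  have hcardV : 7 ≤ Fintype.card V := hncard ▸ hn7
  have hd1 : ∀ v, 1 ≤ T.degree v := fun v => degree_pos_of_tree T hT (by omega) v
  have hd4 : ∀ v, T.degree v ≤ 4 := fun v => hdeg v ▸ hmax v
  have hclass : ∀ v : V, T.degree v = 1 ∨ T.degree v = 2 ∨ T.degree v = 3 ∨ T.degree v = 4 :=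
    fun v => by have := hd1 v; have := hd4 v; omega
  set nd : ℕ → ℕ → ℤ := fun a c =>
    ∑ d : T.Dart, (if T.degree d.fst = a ∧ T.degree d.snd = c then (1:ℤ) else 0) with hnd_def
  set nc : ℕ → ℤ := fun a => ∑ v : V, (if T.degree v = a then (1:ℤ) else 0) with hnc_def
  have hndnn : ∀ a c, 0 ≤ nd a c := fun a c =>
    Finset.sum_nonneg fun d _ => by positivity
  have hncnn : ∀ a, 0 ≤ nc a := fun a =>
    Finset.sum_nonneg fun v _ => by positivity
  have hsym : ∀ a c, nd a c = nd c a := by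
    intro a c
    simp only [hnd_def]
    rw [dart_sum_symm T
      (fun d => if T.degree d.fst = a ∧ T.degree d.snd = c then (1:ℤ) else 0)]
    refine Finset.sum_congr rfl fun d _ => ?_
    rcases d with ⟨⟨x, y⟩, hadj⟩
    exact if_congr and_comm rfl rfl
  have hrow : ∀ a : ℕ, nd a 1 + nd a 2 + nd a 3 + nd a 4 = (a : ℤ) * nc a := by
    intro a
    have hL : nd a 1 + nd a 2 + nd a 3 + nd a 4
        = ∑ d : T.Dart, (if T.degree d.fst = a then (1:ℤ) else 0) := by
      simp only [hnd_def]
      rw [← Finset.sum_add_distrib, ← Finset.sum_add_distrib, ← Finset.sum_add_distrib]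
      refine Finset.sum_congr rfl fun d _ => ?_
      rcases hclass d.snd with h | h | h | h <;> rw [h] <;>
        by_cases hf : T.degree d.fst = a <;> simp [hf]
    rw [hL, dart_sum_fst T (fun v => if T.degree v = a then (1:ℤ) else 0)]
    simp only [hnc_def]
    rw [Finset.mul_sum]
    refine Finset.sum_congr rfl fun v _ => ?_
    by_cases h : T.degree v = a <;> simp [h]
  have hW : 2 * Wp T = nd 2 2 + 2 * nd 2 3 + 3 * nd 2 4 + 2 * nd 3 2 + 4 * nd 3 3
      + 6 * nd 3 4 + 3 * nd 4 2 + 6 * nd 4 3 + 9 * nd 4 4 := by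
    have h1 : Wp T = ∑ e ∈ T.edgeFinset,
        (Sym2.lift ⟨fun u v => ((T.degree u : ℤ) - 1) * ((T.degree v : ℤ) - 1),
          fun u v => by ring⟩) e := by
      unfold Wp
      simp only [hdeg]
    have h2 : 2 * Wp T = ∑ d : T.Dart,
        ((T.degree d.fst : ℤ) - 1) * ((T.degree d.snd : ℤ) - 1) := by
      rw [h1, ← dart_sum_edge]
      refine Finset.sum_congr rfl fun d _ => ?_
      rcases d with ⟨⟨x, y⟩, hadj⟩
      simp [SimpleGraph.Dart.edge]
    rw [h2]
    simp only [hnd_def, Finset.mul_sum, ← Finset.sum_add_distrib]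
    refine Finset.sum_congr rfl fun d _ => ?_
    rcases hclass d.fst with h | h | h | h <;> rcases hclass d.snd with h' | h' | h' | h' <;>
      rw [h, h'] <;> norm_num
  have hcount : ∀ a : ℕ, (#(univ.filter fun v => T.degree v = a) : ℤ) = nc a := by
    intro a
    simp only [hnc_def]
    rw [Finset.card_filter]
    push_cast
    rfl
  have hpart : nc 1 + nc 2 + nc 3 + nc 4 = (n : ℤ) := by
    simp only [hnc_def]
    rw [← Finset.sum_add_distrib, ← Finset.sum_add_distrib, ← Finset.sum_add_distrib]
    have : ∀ v : V, ((if T.degree v = 1 then (1:ℤ) else 0) + (if T.degree v = 2 then 1 else 0)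
        + (if T.degree v = 3 then 1 else 0) + (if T.degree v = 4 then 1 else 0)) = 1 := by
      intro v
      rcases hclass v with h | h | h | h <;> rw [h] <;> norm_num
    rw [Finset.sum_congr rfl fun v _ => this v, Finset.sum_const, Finset.card_univ, ← hncard,
      nsmul_eq_mul, mul_one]
  have hhs : nc 1 + 2 * nc 2 + 3 * nc 3 + 4 * nc 4 = 2 * (n : ℤ) - 2 := by
    have h1 : ∑ v : V, (T.degree v : ℤ)
        = nc 1 + 2 * nc 2 + 3 * nc 3 + 4 * nc 4 := by
      simp only [hnc_def, Finset.mul_sum, ← Finset.sum_add_distrib]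
      refine Finset.sum_congr rfl fun v _ => ?_
      rcases hclass v with h | h | h | h <;> rw [h] <;> norm_num
    have h2 : ∑ v : V, T.degree v = 2 * #T.edgeFinset := T.sum_degrees_eq_twice_card_edges
    have h3 : #T.edgeFinset + 1 = Fintype.card V := hT.card_edgeFinset
    have h2' : ∑ v : V, (T.degree v : ℤ) = 2 * (#T.edgeFinset : ℤ) := by exact_mod_cast h2
    have h3' : (#T.edgeFinset : ℤ) + 1 = ((Fintype.card V : ℕ) : ℤ) := by exact_mod_cast h3
    have h4 : ((Fintype.card V : ℕ) : ℤ) = (n : ℤ) := by rw [hncard]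
    linarith [h1, h2', h3', h4]
  have hb' : (b : ℤ) = nc 3 + nc 4 := by
    have h1 : b = #(univ.filter fun v => 3 ≤ T.degree v) := by
      rw [hb, Nat.card_eq_fintype_card]
      simp_rw [hdeg]
      exact Fintype.card_subtype _
    rw [h1, Finset.card_filter]
    push_cast
    simp only [hnc_def]
    rw [← Finset.sum_add_distrib]
    refine Finset.sum_congr rfl fun v _ => ?_
    rcases hclass v with h | h | h | h <;> rw [h] <;> norm_num
  have h11 : nd 1 1 = 0 := by
    simp only [hnd_def]
    refine Finset.sum_eq_zero fun d _ => ?_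
    rw [if_neg]
    rintro ⟨ha, hc⟩
    exact no_leaf_leaf T hT (by omega) d.adj ha hc
  -- subset bounds
  have hS34 : nc 3 + nc 4 = 0 ∨
      nd 3 3 + nd 3 4 + nd 4 3 + nd 4 4 ≤ 2 * (nc 3 + nc 4) - 2 := by
    by_cases hex : ∃ v, 3 ≤ T.degree v
    · right
      have hcd : (#(univ.filter fun v => 3 ≤ T.degree v) : ℤ) = nc 3 + nc 4 := by
        rw [Finset.card_filter]
        push_cast
        simp only [hnc_def]
        rw [← Finset.sum_add_distrib]
        refine Finset.sum_congr rfl fun v _ => ?_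
        rcases hclass v with h | h | h | h <;> rw [h] <;> norm_num
      have hbd := dart_bound T hT (fun v => 3 ≤ T.degree v) hex
      rw [hcd] at hbd
      have hsum : nd 3 3 + nd 3 4 + nd 4 3 + nd 4 4
          = ∑ d : T.Dart, (if 3 ≤ T.degree d.fst ∧ 3 ≤ T.degree d.snd then (1:ℤ) else 0) := by
        simp only [hnd_def, ← Finset.sum_add_distrib]
        refine Finset.sum_congr rfl fun d _ => ?_
        rcases hclass d.fst with h | h | h | h <;> rcases hclass d.snd with h' | h' | h' | h' <;>
          rw [h, h'] <;> norm_num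
      rw [hsum]
      exact hbd
    · left
      push_neg at hex
      have h3 : nc 3 = 0 := by
        simp only [hnc_def]
        refine Finset.sum_eq_zero fun v _ => ?_
        rw [if_neg]; intro h; have := hex v; omega
      have h4 : nc 4 = 0 := by
        simp only [hnc_def]
        refine Finset.sum_eq_zero fun v _ => ?_
        rw [if_neg]; intro h; have := hex v; omega
      rw [h3, h4]; ring
  have hS234 : nc 2 + nc 3 + nc 4 = 0 ∨
      nd 2 2 + nd 2 3 + nd 2 4 + nd 3 2 + nd 3 3 + nd 3 4 + nd 4 2 + nd 4 3 + nd 4 4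
        ≤ 2 * (nc 2 + nc 3 + nc 4) - 2 := by
    by_cases hex : ∃ v, 2 ≤ T.degree v
    · right
      have hcd : (#(univ.filter fun v => 2 ≤ T.degree v) : ℤ) = nc 2 + nc 3 + nc 4 := by
        rw [Finset.card_filter]
        push_cast
        simp only [hnc_def]
        rw [← Finset.sum_add_distrib, ← Finset.sum_add_distrib]
        refine Finset.sum_congr rfl fun v _ => ?_
        rcases hclass v with h | h | h | h <;> rw [h] <;> norm_num
      have hbd := dart_bound T hT (fun v => 2 ≤ T.degree v) hex
      rw [hcd] at hbd
      have hsum : nd 2 2 + nd 2 3 + nd 2 4 + nd 3 2 + nd 3 3 + nd 3 4 + nd 4 2 + nd 4 3 + nd 4 4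
          = ∑ d : T.Dart, (if 2 ≤ T.degree d.fst ∧ 2 ≤ T.degree d.snd then (1:ℤ) else 0) := by
        simp only [hnd_def, ← Finset.sum_add_distrib]
        refine Finset.sum_congr rfl fun d _ => ?_
        rcases hclass d.fst with h | h | h | h <;> rcases hclass d.snd with h' | h' | h' | h' <;>
          rw [h, h'] <;> norm_num
      rw [hsum]
      exact hbd
    · left
      push_neg at hex
      have hz : ∀ a : ℕ, 2 ≤ a → nc a = 0 := by
        intro a ha
        simp only [hnc_def]
        refine Finset.sum_eq_zero fun v _ => ?_
        rw [if_neg]; intro h; have := hex v; omega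
      rw [hz 2 (by norm_num), hz 3 (by norm_num), hz 4 (by norm_num)]; ring
  have hS3 : nc 3 = 0 ∨ nd 3 3 ≤ 2 * nc 3 - 2 := by
    by_cases hex : ∃ v, T.degree v = 3
    · right
      have hbd := dart_bound T hT (fun v => T.degree v = 3) hex
      rw [hcount 3] at hbd
      simpa only [hnd_def] using hbd
    · left
      push_neg at hex
      simp only [hnc_def]
      exact Finset.sum_eq_zero fun v _ => by rw [if_neg (hex v)]
  have hS4 : nc 4 = 0 ∨ nd 4 4 ≤ 2 * nc 4 - 2 := by
    by_cases hex : ∃ v, T.degree v = 4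
    · right
      have hbd := dart_bound T hT (fun v => T.degree v = 4) hex
      rw [hcount 4] at hbd
      simpa only [hnd_def] using hbd
    · left
      push_neg at hex
      simp only [hnc_def]
      exact Finset.sum_eq_zero fun v _ => by rw [if_neg (hex v)]
  clear_value nd nc
  clear hnd_def hnc_def
  have hrow1 := hrow 1; have hrow2 := hrow 2; have hrow3 := hrow 3; have hrow4 := hrow 4
  push_cast at hrow1 hrow2 hrow3 hrow4
  have hnZ : (7 : ℤ) ≤ (n : ℤ) := by exact_mod_cast hn7
  have hs23 := hsym 2 3; have hs24 := hsym 2 4; have hs34' := hsym 3 4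
  have hs12 := hsym 1 2; have hs13 := hsym 1 3; have hs14 := hsym 1 4
  refine ⟨fun hb1 hb2 => ?_, fun hr1 hr2 => ?_, fun hr1 hr2 => ?_⟩
  · have hb1' : (1 : ℤ) ≤ (b : ℤ) := by exact_mod_cast hb1
    rcases hS34 with h34 | h34 <;>
      linarith [hndnn 1 1, hndnn 1 2, hndnn 1 3, hndnn 1 4, hndnn 2 1, hndnn 2 2, hndnn 2 3,
        hndnn 2 4, hndnn 3 1, hndnn 3 2, hndnn 3 3, hndnn 3 4, hndnn 4 1, hndnn 4 2, hndnn 4 3,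
        hndnn 4 4, hncnn 1, hncnn 2, hncnn 3, hncnn 4]
  · rcases hS34 with h34 | h34 <;> rcases hS234 with h234 | h234 <;>
      rcases hS3 with h3 | h3 <;> rcases hS4 with h4 | h4 <;>
      linarith [hndnn 1 1, hndnn 1 2, hndnn 1 3, hndnn 1 4, hndnn 2 1, hndnn 2 2, hndnn 2 3,
        hndnn 2 4, hndnn 3 1, hndnn 3 2, hndnn 3 3, hndnn 3 4, hndnn 4 1, hndnn 4 2, hndnn 4 3,
        hndnn 4 4, hncnn 1, hncnn 2, hncnn 3, hncnn 4]
  · rcases hS34 with h34 | h34 <;> rcases hS234 with h234 | h234 <;>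
      rcases hS3 with h3 | h3 <;> rcases hS4 with h4 | h4 <;>
      linarith [hndnn 1 1, hndnn 1 2, hndnn 1 3, hndnn 1 4, hndnn 2 1, hndnn 2 2, hndnn 2 3,
        hndnn 2 4, hndnn 3 1, hndnn 3 2, hndnn 3 3, hndnn 3 4, hndnn 4 1, hndnn 4 2, hndnn 4 3,
        hndnn 4 4, hncnn 1, hncnn 2, hncnn 3, hncnn 4]
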